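/- arXiv:2408.07863 — 2 statements merged into one kernel-verified Lean document; each statement's English description precedes it below -/
import Mathlib

section
/- Let T be an interlacing triangular array of rank m and height n, and fix p ∈ {1,…,n}. Then the entries T^{(1)}_{p,k} take a single constant value for all k with p ≤ k ≤ n, and the entries T^{(m)}_{k−p+1,k} take a single constant value for all k with p ≤ k ≤ n. -/
/-!
Fix a value `b` and compare its occurrences in two consecutive rows `k` and `k + 1`. By (b)
there is an occurrence in row `k` between any two in row `k + 1`; row `k + 1` has one occurrence
more, and the coordinates of the two rows have different parity, so the occurrences alternate
strictly. Hence left of an occurrence in row `k` lie strictly more occurrences from row `k + 1`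
than from row `k`. Left of `T^(1)_(p,k)` lie exactly `T^(1)_(j,k)` for `j < p` in row `k` and
`T^(1)_(j,k+1)` for `j ≤ p` in row `k + 1`; by induction on `p` these agree for `j < p`, so the
count forces `T^(1)_(p,k+1) = T^(1)_(p,k)`. The right side is the left side of the array
reflected by `(i, j) ↦ (m + 1 - i, k + 1 - j)`, which reverses the order of the coordinates.
-/

/-- Twice the horizontal coordinate `h(i,j,k) = i*n + j - (n+k)/2` of an entry
`T^(i)_(j,k)` of a triangular array of height `n` (doubled to stay in `ℤ`). -/
def Hc (n i j k : ℕ) : ℤ :=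
  2 * ((i : ℤ) * (n : ℤ) + (j : ℤ)) - ((n : ℤ) + (k : ℤ))

/-- `T` is an interlacing triangular array of rank `m` and height `n`:
entries `T i j k ∈ {1,…,m}` for `1 ≤ i ≤ m`, `1 ≤ j ≤ k ≤ n`;
(a) each value `a ∈ {1,…,m}` occurs exactly `k` times in row `k`;
(b) any two equal entries of row `k` have an interlacing equal entry in row `k-1`
strictly between them in horizontal coordinate. -/
def IsITA (m n : ℕ) (T : ℕ → ℕ → ℕ → ℕ) : Prop :=
  (∀ i j k, 1 ≤ i → i ≤ m → 1 ≤ j → j ≤ k → k ≤ n → T i j k ∈ Finset.Icc 1 m) ∧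
  (∀ k, 1 ≤ k → k ≤ n → ∀ a ∈ Finset.Icc 1 m,
      ((Finset.Icc 1 m ×ˢ Finset.Icc 1 k).filter (fun p => T p.1 p.2 k = a)).card = k) ∧
  (∀ k, 1 ≤ k → k ≤ n → ∀ i j i' j',
      1 ≤ i → i ≤ m → 1 ≤ j → j ≤ k → 1 ≤ i' → i' ≤ m → 1 ≤ j' → j' ≤ k →
      T i j k = T i' j' k → Hc n i j k < Hc n i' j' k →
      ∃ i'' j'', 1 ≤ i'' ∧ i'' ≤ m ∧ 1 ≤ j'' ∧ j'' ≤ k - 1 ∧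
        T i'' j'' (k - 1) = T i j k ∧
        Hc n i j k < Hc n i'' j'' (k - 1) ∧ Hc n i'' j'' (k - 1) < Hc n i' j' k)

open Finset

namespace Finset

variable {α : Type*} [LinearOrder α]

theorem card_le_card_add_one_of_forall_between {P Q : Finset α}
    (h : ∀ x ∈ Q, ∀ y ∈ Q, x < y → ∃ z ∈ P, x < z ∧ z < y) : #Q ≤ #P + 1 := by
  induction Q using Finset.induction_on_max generalizing P with
  | empty => simp
  | insert a s hsa ih =>
    rcases s.eq_empty_or_nonempty with rfl | hs
    · simp
    obtain ⟨z, hzP, hbz, -⟩ := h _ (mem_insert_of_mem (s.max'_mem hs)) a (mem_insert_self a s)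
      (hsa _ (s.max'_mem hs))
    -- every element of `P` separating two elements of `s` lies below `z`
    have hs_le : #s ≤ #(P.filter (· < z)) + 1 := ih fun x hx y hy hxy => by
      obtain ⟨u, huP, hxu, huy⟩ := h x (mem_insert_of_mem hx) y (mem_insert_of_mem hy) hxy
      exact ⟨u, mem_filter.2 ⟨huP, huy.trans ((s.le_max' y hy).trans_lt hbz)⟩, hxu, huy⟩
    have hz : #(P.filter (· < z)) < #P := card_lt_card (filter_ssubset.2 ⟨z, hzP, lt_irrefl z⟩)
    rw [card_insert_of_notMem fun ha => lt_irrefl a (hsa a ha)]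
    omega

theorem card_filter_lt_lt_of_forall_between {P Q : Finset α}
    (h : ∀ x ∈ Q, ∀ y ∈ Q, x < y → ∃ z ∈ P, x < z ∧ z < y) (hPQ : #P < #Q)
    {w : α} (hwP : w ∈ P) (hwQ : w ∉ Q) :
    #(P.filter (· < w)) < #(Q.filter (· < w)) := by
  have hgt : #(Q.filter (w < ·)) ≤ #(P.filter (w < ·)) + 1 :=
    card_le_card_add_one_of_forall_between fun x hx y hy hxy => by
      obtain ⟨z, hzP, hxz, hzy⟩ := h x (mem_filter.1 hx).1 y (mem_filter.1 hy).1 hxy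
      exact ⟨z, mem_filter.2 ⟨hzP, (mem_filter.1 hx).2.trans hxz⟩, hxz, hzy⟩
  have hQ : #(Q.filter (· < w)) + #(Q.filter (w < ·)) = #Q := by
    rw [← card_filter_add_card_filter_not (s := Q) (· < w)]
    congr 2
    refine filter_congr fun x hx => ?_
    exact ⟨fun h' => h'.not_gt, fun h' => (not_lt.1 h').lt_of_ne' (ne_of_mem_of_not_mem hx hwQ)⟩
  have hP : #(P.filter (w < ·)) < #(P.filter fun x => ¬x < w) :=
    card_lt_card ⟨fun x hx => mem_filter.2 ⟨(mem_filter.1 hx).1, (mem_filter.1 hx).2.not_gt⟩,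
      fun hsub => lt_irrefl w (mem_filter.1 (hsub (mem_filter.2 ⟨hwP, lt_irrefl w⟩))).2⟩
  have := card_filter_add_card_filter_not (s := P) (· < w)
  omega

end Finset

section Coordinates

variable {n : ℕ}

theorem Hc_lt_Hc_iff {i j r i' j' r' : ℕ} :
    Hc n i j r < Hc n i' j' r' ↔ 2 * (i * n + j) + r' < 2 * (i' * n + j') + r := by
  rw [← Nat.cast_lt (α := ℤ)]
  push_cast
  unfold Hc
  omega

theorem Hc_eq_Hc_iff {i j i' j' r : ℕ} : Hc n i j r = Hc n i' j' r ↔ i * n + j = i' * n + j' := by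
  rw [← Nat.cast_inj (R := ℤ)]
  push_cast
  unfold Hc
  omega

theorem Hc_ne_Hc_succ (i j r i' j' : ℕ) : Hc n i j r ≠ Hc n i' j' (r + 1) := by
  unfold Hc
  push_cast
  omega

theorem mul_add_lt_add_iff_eq_one_and_lt {i j s : ℕ} (hi : 1 ≤ i) (hj : 1 ≤ j) (hs : s ≤ n + 1) :
    i * n + j < n + s ↔ i = 1 ∧ j < s := by
  rcases hi.eq_or_lt with rfl | hi
  · omega
  · have := Nat.mul_le_mul_right n hi
    omega

theorem Hc_lt_Hc_one_iff {i j s r : ℕ} (hi : 1 ≤ i) (hj : 1 ≤ j) (hs : s ≤ n + 1) :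
    Hc n i j r < Hc n 1 s r ↔ i = 1 ∧ j < s := by
  rw [Hc_lt_Hc_iff, ← mul_add_lt_add_iff_eq_one_and_lt hi hj hs]
  omega

theorem Hc_succ_lt_Hc_one_iff {i j s r : ℕ} (hi : 1 ≤ i) (hj : 1 ≤ j) (hs : s ≤ n) :
    Hc n i j (r + 1) < Hc n 1 s r ↔ i = 1 ∧ j < s + 1 := by
  rw [Hc_lt_Hc_iff, ← mul_add_lt_add_iff_eq_one_and_lt (n := n) (s := s + 1) hi hj (by omega)]
  omega

theorem Hc_injOn (r : ℕ) :
    Set.InjOn (fun q : ℕ × ℕ => Hc n q.1 q.2 r) {q | 1 ≤ q.2 ∧ q.2 ≤ n} := by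
  rintro ⟨i, j⟩ ⟨hj, hjn⟩ ⟨i', j'⟩ ⟨hj', hjn'⟩ h
  replace h : i * n + j = i' * n + j' := Hc_eq_Hc_iff.1 h
  have block : ∀ {a b : ℕ}, a < b → a * n + n ≤ b * n := fun hab => by
    simpa [add_one_mul] using Nat.mul_le_mul_right n hab
  rcases lt_trichotomy i i' with hii | rfl | hii
  · have := block hii; omega
  · simp only [Prod.mk.injEq, true_and]; omega
  · have := block hii; omega

theorem Hc_reflect {m i j r : ℕ} (him : i ≤ m + 1) (hjr : j ≤ r + 1) :
    Hc n (m + 1 - i) (r + 1 - j) r = 2 * (m : ℤ) * n + 2 - Hc n i j r := by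
  unfold Hc
  push_cast [Nat.cast_sub him, Nat.cast_sub hjr]
  ring

end Coordinates

def rowPositions (m n : ℕ) (T : ℕ → ℕ → ℕ → ℕ) (r b : ℕ) : Finset ℤ :=
  ((Icc 1 m ×ˢ Icc 1 r).filter fun q => T q.1 q.2 r = b).image fun q => Hc n q.1 q.2 r

section RowPositions

variable {m n : ℕ} {T : ℕ → ℕ → ℕ → ℕ} {r b : ℕ}

theorem Hc_injOn_rowPositions (hrn : r ≤ n) :
    Set.InjOn (fun q : ℕ × ℕ => Hc n q.1 q.2 r)
      ((Icc 1 m ×ˢ Icc 1 r).filter fun q => T q.1 q.2 r = b) :=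
  (Hc_injOn r).mono fun q hq => by
    simp only [coe_filter, mem_product, mem_Icc, Set.mem_ofPred_eq] at hq ⊢
    omega

theorem mem_rowPositions {x : ℤ} :
    x ∈ rowPositions m n T r b ↔
      ∃ i j, (1 ≤ i ∧ i ≤ m) ∧ (1 ≤ j ∧ j ≤ r) ∧ T i j r = b ∧ Hc n i j r = x := by
  simp only [rowPositions, mem_image, mem_filter, mem_product, mem_Icc, Prod.exists, and_assoc]

theorem card_rowPositions_filter_lt (hrn : r ≤ n) {s : ℕ} (hsr : s ≤ r + 1) (hm : 1 ≤ m)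
    {t : ℤ} (ht : ∀ i j, 1 ≤ i → 1 ≤ j → (Hc n i j r < t ↔ i = 1 ∧ j < s)) :
    #((rowPositions m n T r b).filter (· < t)) = #((Ico 1 s).filter fun j => T 1 j r = b) := by
  rw [rowPositions, filter_image,
    card_image_of_injOn ((Hc_injOn_rowPositions hrn).mono (filter_subset _ _))]
  have hfirst : ((Icc 1 m ×ˢ Icc 1 r).filter fun q => T q.1 q.2 r = b).filter
      (fun q => Hc n q.1 q.2 r < t) =
        ((Ico 1 s).filter fun j => T 1 j r = b).image (Prod.mk 1) := by
    ext ⟨i, j⟩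
    simp only [mem_filter, mem_product, mem_Icc, mem_image, mem_Ico, Prod.mk.injEq]
    constructor
    · rintro ⟨⟨⟨⟨hi, -⟩, hj, -⟩, hv⟩, hlt⟩
      obtain ⟨rfl, hjs⟩ := (ht i j hi hj).1 hlt
      exact ⟨j, ⟨⟨hj, hjs⟩, hv⟩, rfl, rfl⟩
    · rintro ⟨j, ⟨⟨hj, hjs⟩, hv⟩, rfl, rfl⟩
      exact ⟨⟨⟨⟨le_rfl, hm⟩, hj, by omega⟩, hv⟩, (ht 1 j le_rfl hj).2 ⟨rfl, hjs⟩⟩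
  rw [hfirst, card_image_of_injective _ (Prod.mk_right_injective 1)]

theorem Hc_notMem_rowPositions_succ (i j : ℕ) : Hc n i j r ∉ rowPositions m n T (r + 1) b := by
  simp only [mem_rowPositions, not_exists, not_and]
  exact fun _ _ _ _ _ h => Hc_ne_Hc_succ i j r _ _ h.symm

end RowPositions

theorem card_filter_reflect (T : ℕ → ℕ → ℕ → ℕ) (m k a : ℕ) :
    #((Icc 1 m ×ˢ Icc 1 k).filter fun q => T (m + 1 - q.1) (k + 1 - q.2) k = a) =
      #((Icc 1 m ×ˢ Icc 1 k).filter fun q => T q.1 q.2 k = a) := by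
  let σ : ℕ × ℕ → ℕ × ℕ := fun q => (m + 1 - q.1, k + 1 - q.2)
  have hσ : ∀ q ∈ Icc 1 m ×ˢ Icc 1 k, σ q ∈ Icc 1 m ×ˢ Icc 1 k ∧ σ (σ q) = q :=
    fun ⟨i, j⟩ hq => by
      simp only [σ, mem_product, mem_Icc, Prod.ext_iff] at hq ⊢
      omega
  refine card_nbij' σ σ (fun q hq => ?_) (fun q hq => ?_)
    (fun q hq => (hσ q (mem_filter.1 hq).1).2) (fun q hq => (hσ q (mem_filter.1 hq).1).2)
  · simp only [coe_filter, Set.mem_ofPred_eq] at hq ⊢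
    exact ⟨(hσ q hq.1).1, hq.2⟩
  · simp only [coe_filter, Set.mem_ofPred_eq] at hq ⊢
    refine ⟨(hσ q hq.1).1, ?_⟩
    change T (σ (σ q)).1 (σ (σ q)).2 k = a
    rw [(hσ q hq.1).2]
    exact hq.2

namespace IsITA

variable {m n : ℕ} {T : ℕ → ℕ → ℕ → ℕ}

theorem card_rowPositions (hT : IsITA m n T) {r b : ℕ} (hr : 1 ≤ r) (hrn : r ≤ n)
    (hb : b ∈ Icc 1 m) : #(rowPositions m n T r b) = r := by
  rw [rowPositions, card_image_of_injOn (Hc_injOn_rowPositions hrn)]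
  exact hT.2.1 r hr hrn b hb

theorem exists_mem_rowPositions_between (hT : IsITA m n T) {k b : ℕ} (hkn : k + 1 ≤ n) :
    ∀ x ∈ rowPositions m n T (k + 1) b, ∀ y ∈ rowPositions m n T (k + 1) b, x < y →
      ∃ z ∈ rowPositions m n T k b, x < z ∧ z < y := by
  simp only [mem_rowPositions]
  rintro _ ⟨i, j, ⟨hi, him⟩, ⟨hj, hjk⟩, hv, rfl⟩ _ ⟨i', j', ⟨hi', him'⟩, ⟨hj', hjk'⟩, hv', rfl⟩ hlt
  obtain ⟨i'', j'', hi'', him'', hj'', hjk'', hv'', hlt₁, hlt₂⟩ :=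
    hT.2.2 (k + 1) (by omega) hkn i j i' j' hi him hj hjk hi' him' hj' hjk' (hv.trans hv'.symm) hlt
  rw [Nat.add_sub_cancel] at hjk'' hv'' hlt₁ hlt₂
  exact ⟨_, ⟨i'', j'', ⟨hi'', him''⟩, ⟨hj'', hjk''⟩, hv''.trans hv, rfl⟩, hlt₁, hlt₂⟩

theorem apply_one_succ (hT : IsITA m n T) (hm : 1 ≤ m) {k : ℕ} (hkn : k + 1 ≤ n) :
    ∀ p, 1 ≤ p → p ≤ k → T 1 p (k + 1) = T 1 p k := by
  intro p
  induction p using Nat.strong_induction_on with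
  | _ p ih =>
  intro hp hpk
  set b := T 1 p k
  have hb : b ∈ Icc 1 m := hT.1 1 p k le_rfl hm hp hpk (by omega)
  have hw : Hc n 1 p k ∈ rowPositions m n T k b :=
    mem_rowPositions.2 ⟨1, p, ⟨le_rfl, hm⟩, ⟨hp, hpk⟩, rfl, rfl⟩
  have hlt := Finset.card_filter_lt_lt_of_forall_between
    (hT.exists_mem_rowPositions_between hkn)
    (by rw [hT.card_rowPositions (by omega) (by omega) hb,
      hT.card_rowPositions (by omega) hkn hb]; omega)
    hw (Hc_notMem_rowPositions_succ 1 p)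
  rw [card_rowPositions_filter_lt (s := p) (by omega) (by omega) hm
      fun i j hi hj => Hc_lt_Hc_one_iff hi hj (by omega),
    card_rowPositions_filter_lt (s := p + 1) hkn (by omega) hm
      fun i j hi hj => Hc_succ_lt_Hc_one_iff hi hj (by omega),
    Nat.Ico_succ_right_eq_insert_Ico hp, filter_insert] at hlt
  have hleft : (Ico 1 p).filter (fun j => T 1 j (k + 1) = b) = (Ico 1 p).filter (T 1 · k = b) :=
    filter_congr fun j hj => by
      obtain ⟨hj, hjp⟩ := mem_Ico.1 hj
      rw [ih j hjp hj (by omega)]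
  by_contra hne
  rw [if_neg hne, hleft] at hlt
  exact lt_irrefl _ hlt

theorem apply_one_eq_apply_one_self (hT : IsITA m n T) (hm : 1 ≤ m) {p k : ℕ} (hp : 1 ≤ p)
    (hpk : p ≤ k) (hkn : k ≤ n) : T 1 p k = T 1 p p := by
  induction k, hpk using Nat.le_induction with
  | base => rfl
  | succ k hpk ih => rw [hT.apply_one_succ hm hkn p hp hpk, ih (by omega)]

theorem reflect (hT : IsITA m n T) : IsITA m n fun i j k => T (m + 1 - i) (k + 1 - j) k := by
  obtain ⟨hEntry, hCount, hInter⟩ := hT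
  refine ⟨fun i j k hi him hj hjk hkn =>
    hEntry _ _ k (by omega) (by omega) (by omega) (by omega) hkn, fun k hk hkn a ha => ?_, ?_⟩
  · exact (card_filter_reflect T m k a).trans (hCount k hk hkn a ha)
  · intro k hk hkn i j i' j' hi him hj hjk hi' him' hj' hjk' hv hlt
    have hr : ∀ {i j r}, i ≤ m → j ≤ r →
        Hc n (m + 1 - i) (r + 1 - j) r = 2 * m * n + 2 - Hc n i j r :=
      fun hi hj => Hc_reflect (Nat.le_succ_of_le hi) (Nat.le_succ_of_le hj)
    obtain ⟨i'', j'', hi'', him'', hj'', hjk'', hv'', hlt₁, hlt₂⟩ :=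
      hInter k hk hkn (m + 1 - i') (k + 1 - j') (m + 1 - i) (k + 1 - j) (by omega) (by omega)
        (by omega) (by omega) (by omega) (by omega) (by omega) (by omega) hv.symm
        (by rw [hr him' hjk', hr him hjk]; linarith)
    have hj''k : k - j'' = k - 1 + 1 - j'' := by omega
    refine ⟨m + 1 - i'', k - j'', by omega, by omega, by omega, by omega, ?_, ?_, ?_⟩
    · beta_reduce
      rw [Nat.sub_sub_self (by omega), hj''k, Nat.sub_sub_self (by omega), hv'']
      exact hv.symm
    · rw [hj''k, hr him'' hjk'']
      rw [hr him hjk] at hlt₂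
      linarith
    · rw [hj''k, hr him'' hjk'']
      rw [hr him' hjk'] at hlt₁
      linarith

end IsITA

theorem side_triangles_constant_general (m n : ℕ) (hm : 1 ≤ m) (T : ℕ → ℕ → ℕ → ℕ)
    (hT : IsITA m n T) (p : ℕ) (hp : 1 ≤ p) :
    (∀ k k', p ≤ k → k ≤ n → p ≤ k' → k' ≤ n → T 1 p k = T 1 p k') ∧
    (∀ k k', p ≤ k → k ≤ n → p ≤ k' → k' ≤ n →
        T m (k - p + 1) k = T m (k' - p + 1) k') := by
  have left : ∀ {T}, IsITA m n T → ∀ k k', p ≤ k → k ≤ n → p ≤ k' → k' ≤ n →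
      T 1 p k = T 1 p k' := fun hT k k' hk hkn hk' hk'n => by
    rw [hT.apply_one_eq_apply_one_self hm hp hk hkn, hT.apply_one_eq_apply_one_self hm hp hk' hk'n]
  refine ⟨left hT, fun k k' hk hkn hk' hk'n => ?_⟩
  have := left hT.reflect k k' hk hkn hk' hk'n
  simp only [Nat.add_sub_cancel] at this
  rwa [Nat.sub_add_comm hk, Nat.sub_add_comm hk'] at this

/-- In an interlacing triangular array of rank `m` and height `n`, for any fixed
`p ∈ {1,…,n}` the entries `T^(1)_(p,k)` take a single constant value for
`p ≤ k ≤ n`, and the entries `T^(m)_(k-p+1,k)` take a single constant value for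
`p ≤ k ≤ n`. -/
theorem side_triangles_constant (m n : ℕ) (hm : 1 ≤ m) (T : ℕ → ℕ → ℕ → ℕ)
    (hT : IsITA m n T) (p : ℕ) (hp : 1 ≤ p) (hpn : p ≤ n) :
    (∀ k k', p ≤ k → k ≤ n → p ≤ k' → k' ≤ n → T 1 p k = T 1 p k') ∧
    (∀ k k', p ≤ k → k ≤ n → p ≤ k' → k' ≤ n →
        T m (k - p + 1) k = T m (k' - p + 1) k') :=
  side_triangles_constant_general m n hm T hT p hp
end

section
/- Let n ≥ 1, let λ^{(1)} ∈ {2,3}^n, λ^{(2)} ∈ {1,2,3}^n, λ^{(3)} ∈ {1,3}^n, let P be a 1/2/3-puzzle on Δ_n with boundary conditions (λ^{(1)},λ^{(2)},λ^{(3)}), and let T = 𝒯(P). Then the following are equivalent: (b) no upward face of P has its left edge labeled 1, its right edge labeled 3, and its bottom edge labeled 2; (c) the triangle T^{(2)} contains no entry equal to 1 whose upper-left neighbor is 3, and no entry equal to 3 whose upper-left neighbor is 3 and whose upper-right neighbor is 2; (d) the triangle T^{(2)} contains no entry equal to 2 whose upper-right neighbor is 3, and no entry equal to 3 whose upper-left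 neighbor is 1 and whose upper-right neighbor is 3. -/
/-- Edges of the triangular grid `Δ_n`: an edge is encoded as `(d, x, y)` with
`x + y < n`, where `d = 0` is the horizontal edge `{(x,y),(x+1,y)}`,
`d = 1` is the vertical edge `{(x,y),(x,y+1)}` (parallel to the left side), and
`d = 2` is the diagonal edge `{(x+1,y),(x,y+1)}` (parallel to the right side).
A `1/2/3`-puzzle is an edge labeling by `{1,2,3}` such that the three edges of
each upward face (`P 1 x y`, `P 2 x y`, `P 0 x y`) and of each downward face
(`P 2 x y`, `P 0 x (y+1)`, `P 1 (x+1) y`) get pairwise distinct labels. -/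
def IsPuzzle123 (n : ℕ) (P : ℕ → ℕ → ℕ → ℕ) : Prop :=
  (∀ d x y, d < 3 → x + y < n → P d x y ∈ Finset.Icc 1 3) ∧
  (∀ x y, x + y < n →
      P 1 x y ≠ P 2 x y ∧ P 1 x y ≠ P 0 x y ∧ P 2 x y ≠ P 0 x y) ∧
  (∀ x y, x + y + 1 < n →
      P 2 x y ≠ P 0 x (y + 1) ∧ P 2 x y ≠ P 1 (x + 1) y ∧ P 0 x (y + 1) ≠ P 1 (x + 1) y)

/-- The map `𝒯` from `1/2/3`-puzzles on `Δ_n` to triangular arrays: the `k`-th row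
reads the boundary of the copy of `Δ_k` inside `Δ_n` clockwise from the base point:
the left side bottom to top (`T^(1)`), the right side top to bottom (`T^(2)`),
the bottom side right to left (`T^(3)`). -/
def TofP (n : ℕ) (P : ℕ → ℕ → ℕ → ℕ) : ℕ → ℕ → ℕ → ℕ :=
  fun i j k =>
    if 1 ≤ j ∧ j ≤ k ∧ k ≤ n then
      if i = 1 then P 1 0 (j - 1)
      else if i = 2 then P 2 (j - 1) (k - j)
      else if i = 3 then P 0 (k - j) 0
      else 0
    else 0


/-!
The right edges of `Δ_n` along a diagonal `x + y = k - 1` form row `k` of `T^(2)`, so an entry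
of `T^(2)` together with its upper-left and upper-right neighbours is the triple of right-edge
labels `P 2 x y`, `P 2 x (y + 1)`, `P 2 (x + 1) y` around the downward face at `(x, y)`.
Each pattern of (c) forces a `K`-piece on the upward face `(x, y + 1)` above that downward face,
and each pattern of (d) one on the upward face `(x + 1, y)`.
Conversely, a `K`-piece at `(x, y + 1)` whose downward face below shows no pattern of (c) forces
another `K`-piece at `(x + 1, y)`, one row closer to the bottom side; there the labels `{1, 3}`
exclude a bottom edge `2`. Likewise, moving towards the left side, where the labels `{2, 3}`
exclude a left edge `1`, yields a pattern of (d).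
-/

abbrev IsUpKPiece (P : ℕ → ℕ → ℕ → ℕ) (x y : ℕ) : Prop :=
  P 1 x y = 1 ∧ P 2 x y = 3 ∧ P 0 x y = 2

/-- Pattern (c) on an entry `a` of `T^(2)` with upper-left neighbour `b` and upper-right
neighbour `c`; `IsPatternD` is pattern (d) in the same convention. -/
def IsPatternC (a b c : ℕ) : Prop :=
  (a = 1 ∧ b = 3) ∨ (a = 3 ∧ b = 3 ∧ c = 2)

def IsPatternD (a b c : ℕ) : Prop :=
  (a = 2 ∧ c = 3) ∨ (a = 3 ∧ b = 1 ∧ c = 3)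

def IsPerm123 (a b c : ℕ) : Prop :=
  1 ≤ a ∧ a ≤ 3 ∧ 1 ≤ b ∧ b ≤ 3 ∧ 1 ≤ c ∧ c ≤ 3 ∧ a ≠ b ∧ a ≠ c ∧ b ≠ c

namespace IsPuzzle123

variable {n : ℕ} {P : ℕ → ℕ → ℕ → ℕ}

theorem label_mem (hP : IsPuzzle123 n P) {d x y : ℕ} (hd : d < 3) (h : x + y < n) :
    1 ≤ P d x y ∧ P d x y ≤ 3 :=
  Finset.mem_Icc.mp (hP.1 d x y hd h)

theorem isPerm123_up (hP : IsPuzzle123 n P) {x y : ℕ} (h : x + y < n) :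
    IsPerm123 (P 1 x y) (P 2 x y) (P 0 x y) := by
  have := hP.label_mem (d := 0) (by norm_num) h
  have := hP.label_mem (d := 1) (by norm_num) h
  have := hP.label_mem (d := 2) (by norm_num) h
  exact ⟨by omega, by omega, by omega, by omega, by omega, by omega, hP.2.1 x y h⟩

theorem isPerm123_down (hP : IsPuzzle123 n P) {x y : ℕ} (h : x + y + 1 < n) :
    IsPerm123 (P 2 x y) (P 0 x (y + 1)) (P 1 (x + 1) y) := by
  have := hP.label_mem (d := 2) (x := x) (y := y) (by norm_num) (by omega)
  have := hP.label_mem (d := 0) (x := x) (y := y + 1) (by norm_num) (by omega)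
  have := hP.label_mem (d := 1) (x := x + 1) (y := y) (by norm_num) (by omega)
  exact ⟨by omega, by omega, by omega, by omega, by omega, by omega, hP.2.2 x y h⟩

variable {x y : ℕ}

theorem isUpKPiece_of_isPatternC (hP : IsPuzzle123 n P) (h : x + y + 1 < n)
    (hc : IsPatternC (P 2 x y) (P 2 x (y + 1)) (P 2 (x + 1) y)) : IsUpKPiece P x (y + 1) := by
  have hup := hP.isPerm123_up (x := x) (y := y + 1) (by omega)
  have hright := hP.isPerm123_up (x := x + 1) (y := y) (by omega)
  have hdown := hP.isPerm123_down h
  unfold IsPerm123 IsPatternC IsUpKPiece at *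
  omega

theorem isUpKPiece_of_isPatternD (hP : IsPuzzle123 n P) (h : x + y + 1 < n)
    (hd : IsPatternD (P 2 x y) (P 2 x (y + 1)) (P 2 (x + 1) y)) : IsUpKPiece P (x + 1) y := by
  have hup := hP.isPerm123_up (x := x) (y := y + 1) (by omega)
  have hright := hP.isPerm123_up (x := x + 1) (y := y) (by omega)
  have hdown := hP.isPerm123_down h
  unfold IsPerm123 IsPatternD IsUpKPiece at *
  omega

theorem isPatternC_or_isUpKPiece (hP : IsPuzzle123 n P) (h : x + y + 1 < n)
    (hK : IsUpKPiece P x (y + 1)) :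
    IsPatternC (P 2 x y) (P 2 x (y + 1)) (P 2 (x + 1) y) ∨ IsUpKPiece P (x + 1) y := by
  have hright := hP.isPerm123_up (x := x + 1) (y := y) (by omega)
  have hdown := hP.isPerm123_down h
  unfold IsPerm123 IsPatternC IsUpKPiece at *
  omega

theorem isPatternD_or_isUpKPiece (hP : IsPuzzle123 n P) (h : x + y + 1 < n)
    (hK : IsUpKPiece P (x + 1) y) :
    IsPatternD (P 2 x y) (P 2 x (y + 1)) (P 2 (x + 1) y) ∨ IsUpKPiece P x (y + 1) := by
  have hup := hP.isPerm123_up (x := x) (y := y + 1) (by omega)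
  have hdown := hP.isPerm123_down h
  unfold IsPerm123 IsPatternD IsUpKPiece at *
  omega

theorem exists_isPatternC_of_isUpKPiece (hP : IsPuzzle123 n P)
    (hbottom : ∀ x < n, P 0 x 0 ≠ 2) (h : x + y < n) (hK : IsUpKPiece P x y) :
    ∃ a b, a + b + 1 < n ∧ IsPatternC (P 2 a b) (P 2 a (b + 1)) (P 2 (a + 1) b) := by
  induction y generalizing x with
  | zero => exact absurd hK.2.2 (hbottom x (by omega))
  | succ y ih =>
    rcases hP.isPatternC_or_isUpKPiece (by omega) hK with hc | hK'
    · exact ⟨x, y, by omega, hc⟩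
    · exact ih (by omega) hK'

theorem exists_isPatternD_of_isUpKPiece (hP : IsPuzzle123 n P)
    (hleft : ∀ y < n, P 1 0 y ≠ 1) (h : x + y < n) (hK : IsUpKPiece P x y) :
    ∃ a b, a + b + 1 < n ∧ IsPatternD (P 2 a b) (P 2 a (b + 1)) (P 2 (a + 1) b) := by
  induction x generalizing y with
  | zero => exact absurd hK.1 (hleft y (by omega))
  | succ x ih =>
    rcases hP.isPatternD_or_isUpKPiece (by omega) hK with hd | hK'
    · exact ⟨x, y, by omega, hd⟩
    · exact ih (by omega) hK'

theorem exists_isUpKPiece_iff_isPatternC (hP : IsPuzzle123 n P)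
    (hbottom : ∀ x < n, P 0 x 0 ≠ 2) :
    (∃ x y, x + y < n ∧ IsUpKPiece P x y) ↔
      ∃ x y, x + y + 1 < n ∧ IsPatternC (P 2 x y) (P 2 x (y + 1)) (P 2 (x + 1) y) := by
  constructor
  · rintro ⟨x, y, h, hK⟩
    exact hP.exists_isPatternC_of_isUpKPiece hbottom h hK
  · rintro ⟨x, y, h, hc⟩
    exact ⟨x, y + 1, by omega, hP.isUpKPiece_of_isPatternC h hc⟩

theorem exists_isUpKPiece_iff_isPatternD (hP : IsPuzzle123 n P)
    (hleft : ∀ y < n, P 1 0 y ≠ 1) :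
    (∃ x y, x + y < n ∧ IsUpKPiece P x y) ↔
      ∃ x y, x + y + 1 < n ∧ IsPatternD (P 2 x y) (P 2 x (y + 1)) (P 2 (x + 1) y) := by
  constructor
  · rintro ⟨x, y, h, hK⟩
    exact hP.exists_isPatternD_of_isUpKPiece hleft h hK
  · rintro ⟨x, y, h, hd⟩
    exact ⟨x + 1, y, by omega, hP.isUpKPiece_of_isPatternD h hd⟩

end IsPuzzle123

theorem TofP_two {n j k : ℕ} (P : ℕ → ℕ → ℕ → ℕ) (hj : 1 ≤ j) (hjk : j ≤ k) (hk : k ≤ n) :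
    TofP n P 2 j k = P 2 (j - 1) (k - j) := by
  simp [TofP, hj, hjk, hk]

theorem TofP_two_window {n x y : ℕ} (P : ℕ → ℕ → ℕ → ℕ) (h : x + y + 1 < n) :
    TofP n P 2 (x + 1) (x + y + 2 - 1) = P 2 x y ∧ TofP n P 2 (x + 1) (x + y + 2) = P 2 x (y + 1) ∧
      TofP n P 2 (x + 1 + 1) (x + y + 2) = P 2 (x + 1) y := by
  refine ⟨?_, ?_, ?_⟩ <;> rw [TofP_two P (by omega) (by omega) (by omega)] <;> congr 1 <;> omega

theorem exists_TofP_two_window_iff (n : ℕ) (P : ℕ → ℕ → ℕ → ℕ) (Q : ℕ → ℕ → ℕ → Prop) :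
    (∃ j k, 2 ≤ k ∧ k ≤ n ∧ 1 ≤ j ∧ j ≤ k - 1 ∧
        Q (TofP n P 2 j (k - 1)) (TofP n P 2 j k) (TofP n P 2 (j + 1) k)) ↔
      ∃ x y, x + y + 1 < n ∧ Q (P 2 x y) (P 2 x (y + 1)) (P 2 (x + 1) y) := by
  constructor
  · rintro ⟨j, k, hk, hkn, hj, hjk, hQ⟩
    obtain ⟨x, rfl⟩ : ∃ x, j = x + 1 := ⟨j - 1, by omega⟩
    obtain ⟨y, rfl⟩ : ∃ y, k = x + y + 2 := ⟨k - x - 2, by omega⟩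
    obtain ⟨e₁, e₂, e₃⟩ := TofP_two_window P (show x + y + 1 < n by omega)
    exact ⟨x, y, by omega, by rwa [e₁, e₂, e₃] at hQ⟩
  · rintro ⟨x, y, h, hQ⟩
    obtain ⟨e₁, e₂, e₃⟩ := TofP_two_window P h
    exact ⟨x + 1, x + y + 2, by omega, by omega, by omega, by omega, by rwa [e₁, e₂, e₃]⟩

theorem avoid_up_K_piece_general (n : ℕ) (lam : ℕ → ℕ → ℕ)
    (h1 : ∀ j, 1 ≤ j → j ≤ n → lam 1 j = 2 ∨ lam 1 j = 3)
    (h3 : ∀ j, 1 ≤ j → j ≤ n → lam 3 j = 1 ∨ lam 3 j = 3)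
    (P : ℕ → ℕ → ℕ → ℕ) (hP : IsPuzzle123 n P)
    (hbd : ∀ j, 1 ≤ j → j ≤ n →
        P 1 0 (j - 1) = lam 1 j ∧ P 2 (j - 1) (n - j) = lam 2 j ∧
        P 0 (n - j) 0 = lam 3 j) :
    ((¬ ∃ x y, x + y < n ∧ P 1 x y = 1 ∧ P 2 x y = 3 ∧ P 0 x y = 2) ↔
      ((¬ ∃ j k, 2 ≤ k ∧ k ≤ n ∧ 1 ≤ j ∧ j ≤ k - 1 ∧
          TofP n P 2 j (k - 1) = 1 ∧ TofP n P 2 j k = 3) ∧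
       (¬ ∃ j k, 2 ≤ k ∧ k ≤ n ∧ 1 ≤ j ∧ j ≤ k - 1 ∧
          TofP n P 2 j (k - 1) = 3 ∧ TofP n P 2 j k = 3 ∧ TofP n P 2 (j + 1) k = 2))) ∧
    ((¬ ∃ x y, x + y < n ∧ P 1 x y = 1 ∧ P 2 x y = 3 ∧ P 0 x y = 2) ↔
      ((¬ ∃ j k, 2 ≤ k ∧ k ≤ n ∧ 1 ≤ j ∧ j ≤ k - 1 ∧
          TofP n P 2 j (k - 1) = 2 ∧ TofP n P 2 (j + 1) k = 3) ∧
       (¬ ∃ j k, 2 ≤ k ∧ k ≤ n ∧ 1 ≤ j ∧ j ≤ k - 1 ∧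
          TofP n P 2 j (k - 1) = 3 ∧ TofP n P 2 j k = 1 ∧ TofP n P 2 (j + 1) k = 3))) := by
  have hleft : ∀ y < n, P 1 0 y ≠ 1 := fun y hy => by
    have := (hbd (y + 1) (by omega) (by omega)).1
    rcases h1 (y + 1) (by omega) (by omega) with h | h <;> simp_all
  have hbottom : ∀ x < n, P 0 x 0 ≠ 2 := fun x hx => by
    have := (hbd (n - x) (by omega) (by omega)).2.2
    rw [Nat.sub_sub_self hx.le] at this
    rcases h3 (n - x) (by omega) (by omega) with h | h <;> simp_all
  constructor
  · rw [hP.exists_isUpKPiece_iff_isPatternC hbottom, ← exists_TofP_two_window_iff n P IsPatternC]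
    simp only [IsPatternC, and_or_left, exists_or, not_or]
  · rw [hP.exists_isUpKPiece_iff_isPatternD hleft, ← exists_TofP_two_window_iff n P IsPatternD]
    simp only [IsPatternD, and_or_left, exists_or, not_or]

/-- Avoiding the upward `1/2/3` `K`-piece (left edge `1`, right edge `3`, bottom
edge `2`) is equivalent to the pattern avoidance conditions (c) and (d) in the middle
triangle `T^(2)` of `T = 𝒯(P)`. -/
theorem avoid_up_K_piece (n : ℕ) (hn : 1 ≤ n) (lam : ℕ → ℕ → ℕ)
    (h1 : ∀ j, 1 ≤ j → j ≤ n → lam 1 j = 2 ∨ lam 1 j = 3)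
    (h2 : ∀ j, 1 ≤ j → j ≤ n → lam 2 j ∈ Finset.Icc 1 3)
    (h3 : ∀ j, 1 ≤ j → j ≤ n → lam 3 j = 1 ∨ lam 3 j = 3)
    (P : ℕ → ℕ → ℕ → ℕ) (hP : IsPuzzle123 n P)
    (hbd : ∀ j, 1 ≤ j → j ≤ n →
        P 1 0 (j - 1) = lam 1 j ∧ P 2 (j - 1) (n - j) = lam 2 j ∧
        P 0 (n - j) 0 = lam 3 j) :
    ((¬ ∃ x y, x + y < n ∧ P 1 x y = 1 ∧ P 2 x y = 3 ∧ P 0 x y = 2) ↔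
      ((¬ ∃ j k, 2 ≤ k ∧ k ≤ n ∧ 1 ≤ j ∧ j ≤ k - 1 ∧
          TofP n P 2 j (k - 1) = 1 ∧ TofP n P 2 j k = 3) ∧
       (¬ ∃ j k, 2 ≤ k ∧ k ≤ n ∧ 1 ≤ j ∧ j ≤ k - 1 ∧
          TofP n P 2 j (k - 1) = 3 ∧ TofP n P 2 j k = 3 ∧ TofP n P 2 (j + 1) k = 2))) ∧
    ((¬ ∃ x y, x + y < n ∧ P 1 x y = 1 ∧ P 2 x y = 3 ∧ P 0 x y = 2) ↔
      ((¬ ∃ j k, 2 ≤ k ∧ k ≤ n ∧ 1 ≤ j ∧ j ≤ k - 1 ∧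
          TofP n P 2 j (k - 1) = 2 ∧ TofP n P 2 (j + 1) k = 3) ∧
       (¬ ∃ j k, 2 ≤ k ∧ k ≤ n ∧ 1 ≤ j ∧ j ≤ k - 1 ∧
          TofP n P 2 j (k - 1) = 3 ∧ TofP n P 2 j k = 1 ∧ TofP n P 2 (j + 1) k = 3))) :=
  avoid_up_K_piece_general n lam h1 h3 P hP hbd
end
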